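/- arXiv:1711.10099 — 3 statements merged into one kernel-verified Lean document; each statement's English description precedes it below -/
import Mathlib

section
/- Let Δ₁ be the convex hull of {(1,2),(2,1),(−3,−3)} in ℝ². For every integer k ≥ 1 the average of the lattice points of kΔ₁ differs from the barycenter of kΔ₁: (1/|kΔ₁ ∩ ℤ²|)·Σ_{x ∈ kΔ₁ ∩ ℤ²} x ≠ (1/vol(kΔ₁))·∫_{kΔ₁} x dx (the left-hand side equals (−4k/(9k²+3k+2))·(1,1) while the right-hand side is (0,0)). -/
/-!
The linear map of determinant one that permutes the vertices `(1,2) ↦ (2,1) ↦ (-3,-3) ↦ (1,2)`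
preserves Lebesgue measure and every dilate `k • Δ₁`, and it fixes no nonzero vector; hence it
fixes the barycenter of `k • Δ₁`, which is therefore `0`.

The lattice points are not balanced. Seen from the vertex `(-3k,-3k)`, the edge vectors
`(4,5)` and `(5,4)` span a sublattice of index `9` of `ℤ²` with coset representatives
`u • (1,1)`, `u < 9`, so the lattice points of `k • Δ₁` are the points
`(-3k,-3k) + u • (1,1) + i • (4,5) + j • (5,4)` with `2u + 9(i + j) ≤ 9k`. For each residue `u`
the pairs `(i, j)` fill a triangle of side `k + 1`, `k` or `k - 1`, and summing over these
triangles gives `(9k² + 3k + 2)/2` lattice points with coordinate sums `-2k`.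
-/

open MeasureTheory Pointwise

noncomputable section

/-- The lattice points of `ℝ²`: points with integer coordinates. -/
def lat : Set (ℝ × ℝ) := {x | ∃ m n : ℤ, x = ((m : ℝ), (n : ℝ))}

/-- The moment polytope of `X₁ = ℙ²/(ℤ/9ℤ)` polarized by `-3K`. -/
def Δ₁ : Set (ℝ × ℝ) := convexHull ℝ {((1 : ℝ), (2 : ℝ)), (2, 1), (-3, -3)}

open Finset

def triangle (c : ℕ) : Finset (ℕ × ℕ) := (range c).biUnion antidiagonal

@[simp]
lemma mem_triangle {c : ℕ} {p : ℕ × ℕ} : p ∈ triangle c ↔ p.1 + p.2 < c := by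
  simp [triangle]

lemma sum_triangle_succ {M : Type*} [AddCommMonoid M] (c : ℕ) (f : ℕ × ℕ → M) :
    ∑ p ∈ triangle (c + 1), f p = ∑ p ∈ triangle c, f p + ∑ p ∈ antidiagonal c, f p := by
  rw [triangle, range_add_one, biUnion_insert, sum_union, add_comm, ← triangle]
  exact disjoint_left.2 fun p hp hp' => by simp_all

lemma sum_antidiagonal_affine (n : ℕ) (a b d : ℝ) :
    ∑ p ∈ antidiagonal n, (a + b * p.1 + d * p.2) = (n + 1) * (a + (b + d) * n / 2) := by
  have hswap : ∑ p ∈ antidiagonal n, (p.2 : ℝ) = ∑ p ∈ antidiagonal n, (p.1 : ℝ) :=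
    Finset.Nat.sum_antidiagonal_swap (f := fun p => (p.1 : ℝ))
  have hdiag : ∑ p ∈ antidiagonal n, ((p.1 : ℝ) + p.2) = (n + 1) * n := by
    rw [sum_congr rfl fun p hp => by rw [← Nat.cast_add, mem_antidiagonal.1 hp]]
    simp
  simp only [sum_add_distrib, ← mul_sum, sum_const, Nat.card_antidiagonal, nsmul_eq_mul]
    at hdiag ⊢
  push_cast
  linear_combination (b + d) / 2 * hdiag + (d - b) / 2 * hswap

lemma sum_triangle_affine (c : ℕ) (a b d : ℝ) :
    ∑ p ∈ triangle c, (a + b * p.1 + d * p.2) =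
      c * (c + 1) / 2 * a + (c - 1) * c * (c + 1) / 6 * (b + d) := by
  induction c with
  | zero => simp [triangle]
  | succ c ih =>
    rw [sum_triangle_succ, ih, sum_antidiagonal_affine]
    push_cast
    ring

def latticeParams (k : ℕ) : Finset (ℕ × ℕ × ℕ) :=
  (range 9 ×ˢ range (k + 1) ×ˢ range (k + 1)).filter
    fun z => 2 * z.1 + 9 * z.2.1 + 9 * z.2.2 ≤ 9 * k

def latticePoint (k : ℕ) (z : ℕ × ℕ × ℕ) : ℝ × ℝ :=
  (((-3 * k + z.1 + 4 * z.2.1 + 5 * z.2.2 : ℤ) : ℝ),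
    ((-3 * k + z.1 + 5 * z.2.1 + 4 * z.2.2 : ℤ) : ℝ))

-- `(2 * u + 8) / 9` is `⌈2u/9⌉`.
lemma sum_latticeParams_eq_sum_triangle {M : Type*} [AddCommMonoid M] (k : ℕ)
    (f : ℕ → ℕ × ℕ → M) :
    ∑ z ∈ latticeParams k, f z.1 z.2 =
      ∑ u ∈ range 9, ∑ p ∈ triangle (k + 1 - (2 * u + 8) / 9), f u p := by
  rw [latticeParams, sum_filter, sum_product]
  refine sum_congr rfl fun u hu => ?_
  rw [← sum_filter]
  congr 1
  ext p
  simp only [mem_filter, mem_product, mem_range, mem_triangle] at hu ⊢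
  omega

lemma sum_latticeParams_affine (k : ℕ) (a b c d : ℝ) :
    ∑ z ∈ latticeParams k, (a + b * z.1 + c * z.2.1 + d * z.2.2) =
      (9 * k ^ 2 + 3 * k + 2) / 2 * a + (18 * k ^ 2 - 8 * k) * b +
        k * (3 * k ^ 2 - 3 * k + 2) / 2 * (c + d) := by
  have h := sum_latticeParams_eq_sum_triangle k fun u p => (a + b * u) + c * p.1 + d * p.2
  simp only [sum_triangle_affine, sum_range_succ, sum_range_zero] at h
  rw [h]
  -- The side `k + 1 - 2` of the last four triangles is truncated at `k = 0`.
  rcases k with _ | k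
  · norm_num
  · norm_num
    ring

-- The three quantities are `9t` times the barycentric coordinates of `p` with respect to the
-- vertices `t • (1, 2)`, `t • (2, 1)` and `t • (-3, -3)`.
lemma mem_smul_Δ₁_iff {t : ℝ} (ht : 0 < t) (p : ℝ × ℝ) :
    p ∈ t • Δ₁ ↔
      0 ≤ 5 * p.2 - 4 * p.1 + 3 * t ∧ 0 ≤ 5 * p.1 - 4 * p.2 + 3 * t ∧
        0 ≤ 3 * t - p.1 - p.2 := by
  rw [Δ₁, ← convexHull_smul, Set.smul_set_insert, Set.smul_set_insert, Set.smul_set_singleton]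
  constructor
  · intro hp
    let S : Set (ℝ × ℝ) := {q | 0 ≤ 5 * q.2 - 4 * q.1 + 3 * t ∧ 0 ≤ 5 * q.1 - 4 * q.2 + 3 * t ∧
      0 ≤ 3 * t - q.1 - q.2}
    refine convexHull_min (t := S) ?_ ?_ hp
    · rintro _ (rfl | rfl | rfl) <;>
        simp only [S, Set.mem_ofPred_eq, Prod.smul_mk, smul_eq_mul] <;>
        refine ⟨?_, ?_, ?_⟩ <;> linarith
    · rintro x ⟨hx₁, hx₂, hx₃⟩ y ⟨hy₁, hy₂, hy₃⟩ a b ha hb hab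
      simp only [S, Set.mem_ofPred_eq, Prod.fst_add, Prod.snd_add, Prod.smul_fst, Prod.smul_snd,
        smul_eq_mul]
      refine ⟨?_, ?_, ?_⟩ <;> nlinarith [mul_nonneg ha hx₁, mul_nonneg ha hx₂, mul_nonneg ha hx₃,
        mul_nonneg hb hy₁, mul_nonneg hb hy₂, mul_nonneg hb hy₃]
  · rintro ⟨h₁, h₂, h₃⟩
    have h9t : 0 < 9 * t := by positivity
    refine mem_convexHull_of_exists_fintype
      ![(5 * p.2 - 4 * p.1 + 3 * t) / (9 * t), (5 * p.1 - 4 * p.2 + 3 * t) / (9 * t),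
        (3 * t - p.1 - p.2) / (9 * t)]
      ![t • ((1 : ℝ), (2 : ℝ)), t • (2, 1), t • (-3, -3)] ?_ ?_ ?_ ?_
    · intro i
      fin_cases i <;> exact div_nonneg ‹_› h9t.le
    · rw [Fin.sum_univ_three]
      dsimp
      field_simp
      ring
    · intro i
      fin_cases i <;> simp
    · rw [Fin.sum_univ_three]
      ext <;> dsimp <;> field_simp <;> ring

lemma latticePoint_injOn (k : ℕ) : Set.InjOn (latticePoint k) (latticeParams k) := by
  rintro ⟨u, i, j⟩ hz ⟨u', i', j'⟩ hz' h
  simp only [latticeParams, coe_filter, mem_product, mem_range, Set.mem_ofPred_eq] at hz hz'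
  simp only [latticePoint, Prod.ext_iff, Int.cast_inj] at h
  simp only [Prod.ext_iff]
  omega

lemma smul_Δ₁_inter_lat {k : ℕ} (hk : 0 < k) :
    (k : ℝ) • Δ₁ ∩ lat = (latticeParams k).image (latticePoint k) := by
  have hk' : (0 : ℝ) < k := Nat.cast_pos.2 hk
  ext p
  simp only [Set.mem_inter_iff, mem_smul_Δ₁_iff hk', coe_image, Set.mem_image, mem_coe,
    latticeParams, mem_filter, mem_product, mem_range]
  constructor
  · rintro ⟨⟨h₁, h₂, h₃⟩, m, n, rfl⟩
    dsimp only at h₁ h₂ h₃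
    have hA : 0 ≤ 5 * n - 4 * m + 3 * (k : ℤ) := by exact_mod_cast h₁
    have hB : 0 ≤ 5 * m - 4 * n + 3 * (k : ℤ) := by exact_mod_cast h₂
    have hC : 0 ≤ 3 * (k : ℤ) - m - n := by exact_mod_cast h₃
    -- The parameters `(u, i, j)` of `(m, n)` satisfy `5n - 4m + 3k = u + 9i` and
    -- `5m - 4n + 3k = u + 9j`.
    have hmod : (5 * n - 4 * m + 3 * k) % 9 = (5 * m - 4 * n + 3 * k) % 9 := by omega
    refine ⟨((5 * n - 4 * m + 3 * k) % 9 |>.toNat, (5 * n - 4 * m + 3 * k) / 9 |>.toNat,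
      (5 * m - 4 * n + 3 * k) / 9 |>.toNat), ⟨⟨?_, ?_, ?_⟩, ?_⟩, ?_⟩ <;>
      simp only [latticePoint, Prod.ext_iff, Int.cast_inj] <;> omega
  · rintro ⟨⟨u, i, j⟩, ⟨-, hz⟩, rfl⟩
    refine ⟨?_, _, _, rfl⟩
    have hz' : (2 * u + 9 * i + 9 * j : ℝ) ≤ 9 * k := by exact_mod_cast hz
    simp only [latticePoint]
    push_cast
    refine ⟨?_, ?_, ?_⟩ <;>
      linarith [(u.cast_nonneg : (0 : ℝ) ≤ u), (i.cast_nonneg : (0 : ℝ) ≤ i),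
        (j.cast_nonneg : (0 : ℝ) ≤ j)]

lemma ncard_smul_Δ₁_inter_lat {k : ℕ} (hk : 0 < k) :
    (((k : ℝ) • Δ₁ ∩ lat).ncard : ℝ) = (9 * k ^ 2 + 3 * k + 2) / 2 := by
  rw [smul_Δ₁_inter_lat hk, Set.ncard_coe_finset, card_image_of_injOn (latticePoint_injOn k),
    card_eq_sum_ones, Nat.cast_sum]
  simpa using sum_latticeParams_affine k 1 0 0 0

lemma finsum_smul_Δ₁_inter_lat {k : ℕ} (hk : 0 < k) :
    ∑ᶠ x ∈ (k : ℝ) • Δ₁ ∩ lat, x = ((-2 * k : ℝ), (-2 * k : ℝ)) := by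
  rw [smul_Δ₁_inter_lat hk, finsum_mem_coe_finset, sum_image (latticePoint_injOn k)]
  ext
  · have h := sum_latticeParams_affine k (-3 * k) 1 4 5
    simp only [one_mul] at h
    simp only [Prod.fst_sum, latticePoint]
    push_cast
    rw [h]
    ring
  · have h := sum_latticeParams_affine k (-3 * k) 1 5 4
    simp only [one_mul] at h
    simp only [Prod.snd_sum, latticePoint]
    push_cast
    rw [h]
    ring

theorem ContinuousLinearEquiv.measurePreserving_of_abs_det_eq_one {E : Type*}
    [NormedAddCommGroup E] [NormedSpace ℝ E] [MeasurableSpace E] [BorelSpace E]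
    [FiniteDimensional ℝ E] (μ : Measure E) [μ.IsAddHaarMeasure] (L : E ≃L[ℝ] E)
    (hL : |LinearMap.det (L : E →ₗ[ℝ] E)| = 1) : MeasurePreserving L μ μ := by
  refine ⟨L.continuous.measurable, ?_⟩
  have := Measure.map_linearMap_addHaar_eq_smul_addHaar μ (f := (L : E →ₗ[ℝ] E))
    (by intro h; simp [h] at hL)
  simpa [hL] using this

theorem ContinuousLinearEquiv.map_setIntegral_id_of_image_eq {E : Type*} [NormedAddCommGroup E]
    [NormedSpace ℝ E] [MeasurableSpace E] [BorelSpace E] {μ : Measure E} (L : E ≃L[ℝ] E)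
    (hL : MeasurePreserving L μ μ) {s : Set E} (hs : L '' s = s) :
    L (∫ x in s, x ∂μ) = ∫ x in s, x ∂μ :=
  calc L (∫ x in s, x ∂μ) = ∫ x in s, L x ∂μ := (L.integral_comp_comm _).symm
    _ = ∫ x in L '' s, x ∂μ :=
      (hL.setIntegral_image_emb L.toHomeomorph.measurableEmbedding (fun x => x) s).symm
    _ = ∫ x in s, x ∂μ := by rw [hs]

-- The linear map `(1, 2) ↦ (2, 1) ↦ (-3, -3) ↦ (1, 2)`, which exists because the vertices of
-- `Δ₁` sum to `0`.
def vertexCycleMatrix : Matrix (Fin 2) (Fin 2) ℝ := !![-8 / 3, 7 / 3; -7 / 3, 5 / 3]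

lemma det_vertexCycleMatrix : vertexCycleMatrix.det = 1 := by
  rw [vertexCycleMatrix, Matrix.det_fin_two_of]
  norm_num

def vertexCycle : (ℝ × ℝ) ≃L[ℝ] ℝ × ℝ :=
  (Matrix.toLinearEquiv (Module.Basis.finTwoProd ℝ) vertexCycleMatrix
    (by simp [det_vertexCycleMatrix])).toContinuousLinearEquiv

lemma vertexCycle_apply (p : ℝ × ℝ) :
    vertexCycle p = (-8 / 3 * p.1 + 7 / 3 * p.2, -7 / 3 * p.1 + 5 / 3 * p.2) :=
  Matrix.toLin_finTwoProd_apply _ _ _ _ p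

lemma measurePreserving_vertexCycle :
    MeasurePreserving vertexCycle (volume : Measure (ℝ × ℝ)) volume :=
  vertexCycle.measurePreserving_of_abs_det_eq_one _ <| by
    change |LinearMap.det (Matrix.toLin (Module.Basis.finTwoProd ℝ) _ vertexCycleMatrix)| = 1
    rw [LinearMap.det_toLin, det_vertexCycleMatrix, abs_one]

lemma vertexCycle_image_Δ₁ : vertexCycle '' Δ₁ = Δ₁ := by
  rw [Δ₁, ← ContinuousLinearEquiv.coe_toLinearEquiv, ← LinearEquiv.coe_toLinearMap,
    LinearMap.image_convexHull]
  congr 1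
  simp only [Set.image_insert_eq, Set.image_singleton, LinearEquiv.coe_toLinearMap,
    ContinuousLinearEquiv.coe_toLinearEquiv, vertexCycle_apply]
  norm_num
  rw [Set.pair_comm, Set.insert_comm]

lemma eq_zero_of_vertexCycle_eq {v : ℝ × ℝ} (hv : vertexCycle v = v) : v = 0 := by
  rw [vertexCycle_apply, Prod.ext_iff] at hv
  ext <;> simp only [Prod.fst_zero, Prod.snd_zero] <;> linarith [hv.1, hv.2]

lemma setIntegral_id_smul_Δ₁ (t : ℝ) : ∫ x in t • Δ₁, x = 0 :=
  eq_zero_of_vertexCycle_eq <| vertexCycle.map_setIntegral_id_of_image_eq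
    measurePreserving_vertexCycle <| by rw [image_smul_set, vertexCycle_image_Δ₁]

/-- For every `k ≥ 1`, the average of the lattice points of `kΔ₁` differs from the
barycenter of `kΔ₁`: the former equals `(4/(9k²+3k+2))·(-k,-k)` while the latter is `(0,0)`. -/
theorem X1_barycenter_obstruction (k : ℕ) (hk : 1 ≤ k) :
    ((((k : ℝ) • Δ₁) ∩ lat).ncard : ℝ)⁻¹ • (∑ᶠ x ∈ ((k : ℝ) • Δ₁) ∩ lat, x) ≠
        (volume ((k : ℝ) • Δ₁)).toReal⁻¹ • (∫ x in (k : ℝ) • Δ₁, x) ∧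
      ((((k : ℝ) • Δ₁) ∩ lat).ncard : ℝ)⁻¹ • (∑ᶠ x ∈ ((k : ℝ) • Δ₁) ∩ lat, x) =
        (4 / (9 * (k : ℝ) ^ 2 + 3 * k + 2)) • ((-(k : ℝ), -(k : ℝ)) : ℝ × ℝ) ∧
      (volume ((k : ℝ) • Δ₁)).toReal⁻¹ • (∫ x in (k : ℝ) • Δ₁, x) = (0 : ℝ × ℝ) := by
  have hk' : (0 : ℝ) < k := by exact_mod_cast hk
  rw [setIntegral_id_smul_Δ₁, smul_zero, ncard_smul_Δ₁_inter_lat hk,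
    finsum_smul_Δ₁_inter_lat hk]
  refine ⟨smul_ne_zero (by positivity) (by simp [Prod.ext_iff, hk'.ne']), ?_, rfl⟩
  ext <;> simp only [Prod.smul_fst, Prod.smul_snd, smul_eq_mul] <;> field_simp <;> ring
end
end

section
/- Let Δ₁ be the convex hull of {(1,2),(2,1),(−3,−3)} in ℝ². For every integer k ≥ 1 the number of lattice points of kΔ₁ is |kΔ₁ ∩ ℤ²| = (9k² + 3k + 2)/2, and the sum of the lattice points is Σ_{x ∈ kΔ₁ ∩ ℤ²} x = (−2k, −2k); equivalently, (1/|kΔ₁ ∩ ℤ²|)·Σ_{x ∈ kΔ₁ ∩ ℤ²} x = (4/(9k²+3k+2))·(−k,−k) ≠ (0,0). -/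
open MeasureTheory Pointwise

noncomputable section

/-! In the unimodular coordinates `t = x + y + 6k`, `c = y + 3k` the lattice points of `kΔ₁`
are the pairs of naturals with `4t ≤ 9c ≤ 5t` and `t ≤ 9k`. The column over `t` holds
`N(t) = ⌊5t/9⌋ - ⌈4t/9⌉ + 1` points and `N(t + 9) = N(t) + 1`, so the count `∑ N(t)` and the
first moment `∑ t N(t)` follow by induction on `k`, nine columns at a time. The reflection
`c ↦ t - c` of each column is the swap `x ↔ y`, so `∑ c = (∑ t) / 2`, and this gives the sum
of the lattice points. -/

open Finset

theorem smul_add_smul_add_smul_mem_convexHull {E : Type*} [AddCommGroup E] [Module ℝ E]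
    (u v w : E) {a b c : ℝ} (ha : 0 ≤ a) (hb : 0 ≤ b) (hc : 0 ≤ c) (habc : a + b + c = 1) :
    a • u + b • v + c • w ∈ convexHull ℝ {u, v, w} := by
  have := (convex_convexHull ℝ {u, v, w}).sum_mem (t := univ) (w := ![a, b, c])
    (z := ![u, v, w]) (by simp [Fin.forall_fin_succ, ha, hb, hc])
    (by simp [Fin.sum_univ_three, habc])
    (fun i _ => subset_convexHull ℝ _ (by fin_cases i <;> simp))
  simpa [Fin.sum_univ_three] using this

open LinearMap in
theorem Δ₁_eq_setOf :
    Δ₁ = {x | x.1 + x.2 ≤ 3 ∧ 4 * x.1 - 5 * x.2 ≤ 3 ∧ 4 * x.2 - 5 * x.1 ≤ 3} := by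
  apply Set.Subset.antisymm
  · refine convexHull_min ?_ ?_
    · rintro x (rfl | rfl | rfl) <;> norm_num
    · simp only [Set.ofPred_and]
      refine .inter ?_ (.inter ?_ ?_)
      · exact convex_halfSpace_le (fst ℝ ℝ ℝ + snd ℝ ℝ ℝ).isLinear 3
      · exact convex_halfSpace_le ((4 : ℝ) • fst ℝ ℝ ℝ - (5 : ℝ) • snd ℝ ℝ ℝ).isLinear 3
      · exact convex_halfSpace_le ((4 : ℝ) • snd ℝ ℝ ℝ - (5 : ℝ) • fst ℝ ℝ ℝ).isLinear 3
  · rintro ⟨x, y⟩ ⟨h₁, h₂, h₃⟩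
    -- the barycentric coordinates are the slacks of the three facet inequalities, over 9
    rw [Δ₁]
    convert smul_add_smul_add_smul_mem_convexHull ((1 : ℝ), (2 : ℝ)) (2, 1) (-3, -3)
      (a := (3 - 4 * x + 5 * y) / 9) (b := (3 + 5 * x - 4 * y) / 9) (c := (3 - x - y) / 9)
      (by linarith) (by linarith) (by linarith) (by ring) using 1
    ext <;> simp only [Prod.smul_mk, smul_eq_mul, Prod.mk_add_mk] <;> ring

theorem smul_Δ₁_eq_setOf {r : ℝ} (hr : 0 < r) :
    r • Δ₁ =
      {x | x.1 + x.2 ≤ 3 * r ∧ 4 * x.1 - 5 * x.2 ≤ 3 * r ∧ 4 * x.2 - 5 * x.1 ≤ 3 * r} := by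
  ext x
  rw [Set.mem_smul_set_iff_inv_smul_mem₀ hr.ne', Δ₁_eq_setOf]
  simp only [Set.mem_ofPred_eq, Prod.smul_fst, Prod.smul_snd, smul_eq_mul]
  have hscale : ∀ a : ℝ, r⁻¹ * a ≤ 3 ↔ a ≤ 3 * r := fun a => by
    rw [inv_mul_le_iff₀ hr, mul_comm]
  rw [← hscale, ← hscale, ← hscale]
  ring_nf

namespace X1

def column (t : ℕ) : Finset ℕ := Icc ((4 * t + 8) / 9) (5 * t / 9)

theorem mem_column {t c : ℕ} : c ∈ column t ↔ 4 * t ≤ 9 * c ∧ 9 * c ≤ 5 * t := by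
  simp only [column, mem_Icc]
  omega

theorem card_column_add_nine_mul (t k : ℕ) : #(column (t + 9 * k)) = #(column t) + k := by
  have hupper : 5 * (t + 9 * k) / 9 = 5 * t / 9 + 5 * k := by omega
  have hlower : (4 * (t + 9 * k) + 8) / 9 = (4 * t + 8) / 9 + 4 * k := by omega
  simp only [column, Nat.card_Icc, hupper, hlower]
  omega

theorem card_column_nine_mul_add (k i : ℕ) :
    #(column (9 * k + 1 + i)) = #(column (1 + i)) + k := by
  rw [← card_column_add_nine_mul]
  ring_nf

theorem two_mul_sum_card_column (k : ℕ) :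
    2 * ∑ t ∈ range (9 * k + 1), #(column t) = 9 * k ^ 2 + 3 * k + 2 := by
  induction k with
  | zero => decide
  | succ k ih =>
    rw [show 9 * (k + 1) + 1 = 9 * k + 1 + 9 by ring, sum_range_add, mul_add, ih]
    simp only [card_column_nine_mul_add]
    simp only [sum_range_succ, sum_range_zero, column, Nat.card_Icc]
    norm_num
    ring

theorem sum_mul_card_column (k : ℕ) :
    ∑ t ∈ range (9 * k + 1), t * #(column t) = 27 * k ^ 3 + 9 * k ^ 2 + 2 * k := by
  induction k with
  | zero => decide
  | succ k ih =>
    rw [show 9 * (k + 1) + 1 = 9 * k + 1 + 9 by ring, sum_range_add, ih]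
    simp only [card_column_nine_mul_add]
    simp only [sum_range_succ, sum_range_zero, column, Nat.card_Icc]
    norm_num
    ring

def cone (k : ℕ) : Finset (ℕ × ℕ) :=
  (range (9 * k + 1) ×ˢ range (5 * k + 1)).filter
    fun p => 4 * p.1 ≤ 9 * p.2 ∧ 9 * p.2 ≤ 5 * p.1

theorem mem_cone {k : ℕ} {p : ℕ × ℕ} :
    p ∈ cone k ↔ p.1 ≤ 9 * k ∧ 4 * p.1 ≤ 9 * p.2 ∧ 9 * p.2 ≤ 5 * p.1 := by
  simp only [cone, mem_filter, mem_product, mem_range]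
  omega

theorem sum_cone {M : Type*} [AddCommMonoid M] (k : ℕ) (f : ℕ × ℕ → M) :
    ∑ p ∈ cone k, f p = ∑ t ∈ range (9 * k + 1), ∑ c ∈ column t, f (t, c) :=
  sum_finset_product _ _ _ fun p => by
    rw [mem_cone, mem_range, mem_column]
    omega

theorem two_mul_card_cone (k : ℕ) : 2 * #(cone k) = 9 * k ^ 2 + 3 * k + 2 := by
  rw [card_eq_sum_ones, sum_cone]
  simpa using two_mul_sum_card_column k

theorem sum_fst_cone (k : ℕ) : ∑ p ∈ cone k, p.1 = 27 * k ^ 3 + 9 * k ^ 2 + 2 * k := by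
  rw [sum_cone]
  simpa [mul_comm] using sum_mul_card_column k

theorem two_mul_sum_snd_cone (k : ℕ) : 2 * ∑ p ∈ cone k, p.2 = ∑ p ∈ cone k, p.1 := by
  have hle : ∀ p ∈ cone k, p.2 ≤ p.1 := fun p hp => by
    rw [mem_cone] at hp
    omega
  -- `(t, c) ↦ (t, t - c)` is the swap `x ↔ y` in the original coordinates
  have hreflect : ∑ p ∈ cone k, p.2 = ∑ p ∈ cone k, (p.1 - p.2) :=
    sum_nbij' (fun p => (p.1, p.1 - p.2)) (fun p => (p.1, p.1 - p.2))
      (fun p hp => by simp only [mem_cone] at hp ⊢; omega)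
      (fun p hp => by simp only [mem_cone] at hp ⊢; omega)
      (fun p hp => Prod.ext rfl (Nat.sub_sub_self (hle p hp)))
      (fun p hp => Prod.ext rfl (Nat.sub_sub_self (hle p hp)))
      (fun p hp => (Nat.sub_sub_self (hle p hp)).symm)
  rw [two_mul]
  nth_rw 2 [hreflect]
  rw [← sum_add_distrib]
  exact sum_congr rfl fun p hp => by have := hle p hp; omega

def toLattice (k : ℕ) (p : ℕ × ℕ) : ℝ × ℝ := ((p.1 : ℝ) - p.2 - 3 * k, (p.2 : ℝ) - 3 * k)

theorem toLattice_injective (k : ℕ) : Function.Injective (toLattice k) := by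
  intro p q h
  simp only [toLattice, Prod.mk.injEq] at h
  ext
  · exact_mod_cast (by linarith [h.1, h.2] : (p.1 : ℝ) = q.1)
  · exact_mod_cast (by linarith [h.2] : (p.2 : ℝ) = q.2)

theorem smul_Δ₁_inter_lat {k : ℕ} (hk : 0 < k) :
    ((k : ℝ) • Δ₁) ∩ lat = toLattice k '' cone k := by
  ext x
  rw [smul_Δ₁_eq_setOf (by positivity)]
  constructor
  · rintro ⟨⟨h₁, h₂, h₃⟩, m, n, rfl⟩
    dsimp only at h₁ h₂ h₃
    have h₁ : m + n ≤ 3 * k := by exact_mod_cast h₁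
    have h₂ : 4 * m - 5 * n ≤ 3 * k := by exact_mod_cast h₂
    have h₃ : 4 * n - 5 * m ≤ 3 * k := by exact_mod_cast h₃
    obtain ⟨t, ht⟩ : ∃ t : ℕ, (t : ℤ) = m + n + 6 * k := ⟨_, Int.toNat_of_nonneg (by omega)⟩
    obtain ⟨c, hc⟩ : ∃ c : ℕ, (c : ℤ) = n + 3 * k := ⟨_, Int.toNat_of_nonneg (by omega)⟩
    have htR : (t : ℝ) = m + n + 6 * k := by exact_mod_cast ht
    have hcR : (c : ℝ) = n + 3 * k := by exact_mod_cast hc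
    refine ⟨(t, c), mem_cone.2 (by omega), ?_⟩
    simp only [toLattice, htR, hcR]
    ext <;> ring
  · rintro ⟨⟨t, c⟩, hp, rfl⟩
    obtain ⟨h₁, h₂, h₃⟩ := mem_cone.1 hp
    have h₁ : (t : ℝ) ≤ 9 * k := by exact_mod_cast h₁
    have h₂ : 4 * (t : ℝ) ≤ 9 * c := by exact_mod_cast h₂
    have h₃ : 9 * (c : ℝ) ≤ 5 * t := by exact_mod_cast h₃
    refine ⟨⟨?_, ?_, ?_⟩, (t : ℤ) - c - 3 * k, (c : ℤ) - 3 * k, by simp [toLattice]⟩ <;>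
      simp only [toLattice] <;> linarith

theorem two_mul_ncard_smul_Δ₁_inter_lat {k : ℕ} (hk : 0 < k) :
    2 * (((k : ℝ) • Δ₁) ∩ lat).ncard = 9 * k ^ 2 + 3 * k + 2 := by
  rw [smul_Δ₁_inter_lat hk, Set.ncard_image_of_injective _ (toLattice_injective k),
    Set.ncard_coe_finset, two_mul_card_cone]

theorem finsum_smul_Δ₁_inter_lat {k : ℕ} (hk : 0 < k) :
    ∑ᶠ x ∈ ((k : ℝ) • Δ₁) ∩ lat, x = (-(2 * (k : ℝ)), -(2 * (k : ℝ))) := by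
  rw [smul_Δ₁_inter_lat hk, finsum_mem_image (toLattice_injective k).injOn,
    finsum_mem_coe_finset]
  have hcard : 2 * (#(cone k) : ℝ) = 9 * k ^ 2 + 3 * k + 2 := by
    exact_mod_cast two_mul_card_cone k
  have hfst : ∑ p ∈ cone k, (p.1 : ℝ) = 27 * k ^ 3 + 9 * k ^ 2 + 2 * k := by
    exact_mod_cast sum_fst_cone k
  have hsnd : 2 * ∑ p ∈ cone k, (p.2 : ℝ) = ∑ p ∈ cone k, (p.1 : ℝ) := by
    exact_mod_cast two_mul_sum_snd_cone k
  simp only [toLattice, Prod.ext_iff, Prod.fst_sum, Prod.snd_sum, sum_sub_distrib, sum_const,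
    nsmul_eq_mul]
  constructor
  · linear_combination (-1 / 2 : ℝ) * hsnd + hfst / 2 - 3 * k / 2 * hcard
  · linear_combination hsnd / 2 + hfst / 2 - 3 * k / 2 * hcard

end X1

/-- For every `k ≥ 1`: the number of lattice points of `kΔ₁` is `(9k²+3k+2)/2`, their sum is
`(-2k,-2k)`, and hence their average is `(4/(9k²+3k+2))·(-k,-k) ≠ (0,0)`. -/
theorem X1_lattice_point_count_and_sum (k : ℕ) (hk : 1 ≤ k) :
    2 * (((k : ℝ) • Δ₁) ∩ lat).ncard = 9 * k ^ 2 + 3 * k + 2 ∧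
      (∑ᶠ x ∈ ((k : ℝ) • Δ₁) ∩ lat, x) = ((-(2 * (k : ℝ)), -(2 * (k : ℝ))) : ℝ × ℝ) ∧
      ((((k : ℝ) • Δ₁) ∩ lat).ncard : ℝ)⁻¹ • (∑ᶠ x ∈ ((k : ℝ) • Δ₁) ∩ lat, x) =
        (4 / (9 * (k : ℝ) ^ 2 + 3 * k + 2)) • ((-(k : ℝ), -(k : ℝ)) : ℝ × ℝ) ∧
      ((((k : ℝ) • Δ₁) ∩ lat).ncard : ℝ)⁻¹ • (∑ᶠ x ∈ ((k : ℝ) • Δ₁) ∩ lat, x) ≠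
        (0 : ℝ × ℝ) := by
  have hcard := X1.two_mul_ncard_smul_Δ₁_inter_lat hk
  have hsum := X1.finsum_smul_Δ₁_inter_lat hk
  have hN : ((((k : ℝ) • Δ₁) ∩ lat).ncard : ℝ) = (9 * k ^ 2 + 3 * k + 2) / 2 := by
    have := congrArg (Nat.cast : ℕ → ℝ) hcard
    push_cast at this
    linarith
  refine ⟨hcard, hsum, ?_, ?_⟩
  · rw [hsum, hN]
    ext <;> simp only [Prod.smul_mk, smul_eq_mul] <;> field_simp <;> ring
  · rw [hsum, hN, Ne, smul_eq_zero, not_or, Prod.mk_eq_zero]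
    have hk' : (1 : ℝ) ≤ k := by exact_mod_cast hk
    exact ⟨by positivity, fun h => by linarith [h.1]⟩
end
end

section
/- Let p₀, p₁, p₂ ∈ ℝ² be affinely independent points, let T = conv{p₀,p₁,p₂} be the triangle they span, and let g : T → ℝ be a continuous concave function. Then (1/vol(T))·∫_T g dA ≥ (g(p₀) + g(p₁) + g(p₂))/3, with equality if and only if g is affine on T. -/
/-!
Let `A` be the affine function agreeing with `g` at the three vertices. Since `g - A` is concave
and vanishes at the vertices, `A ≤ g` on `T`. The average of an affine function over a simplex is
the mean of its vertex values: by linearity it suffices to show that all barycentric coordinates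
have the same integral, and the affine involution of the simplex swapping two vertices preserves
Lebesgue measure and swaps the corresponding coordinates. If the averages of `g` and `A` agree, the
continuous nonnegative function `g - A` has integral zero, so it vanishes on the interior of `T`,
hence on `T = closure (interior T)`.
-/

open MeasureTheory

noncomputable section

def IsAffineOn (D : Set (ℝ × ℝ)) (g : ℝ × ℝ → ℝ) : Prop :=
  ∃ (l : (ℝ × ℝ) →ₗ[ℝ] ℝ) (c : ℝ), ∀ x ∈ D, g x = l x + c

open Set

namespace AffineBasis

variable {ι k V P F : Type*} [Ring k] [AddCommGroup V] [Module k V] [AddTorsor V P]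
  [AddCommGroup F] [Module k F] (b : AffineBasis ι k P)

theorem affineMap_ext {Q : Type*} [AddTorsor F Q] {f f' : P →ᵃ[k] Q}
    (h : ∀ i, f (b i) = f' (b i)) : f = f' :=
  AffineMap.ext_on b.tot (by rintro _ ⟨i, rfl⟩; exact h i)

variable [Fintype ι]

def constr (q : ι → F) : P →ᵃ[k] F :=
  (Fintype.linearCombination k q).toAffineMap.comp b.coords

theorem constr_apply (q : ι → F) (x : P) : b.constr q x = ∑ i, b.coord i x • q i := rfl

@[simp]
theorem constr_apply_self (q : ι → F) (j : ι) : b.constr q (b j) = q j := by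
  classical
  simp [constr_apply, coord_apply]

theorem eq_constr (f : P →ᵃ[k] F) : f = b.constr (f ∘ b) :=
  b.affineMap_ext fun i => by simp

end AffineBasis

theorem ConcaveOn.affineMap_le_of_mem_convexHull {E : Type*} [AddCommGroup E] [Module ℝ E]
    {s : Set E} {g : E → ℝ} (hg : ConcaveOn ℝ (convexHull ℝ s) g) (f : E →ᵃ[ℝ] ℝ)
    (hfg : ∀ x ∈ s, f x ≤ g x) {x : E} (hx : x ∈ convexHull ℝ s) : f x ≤ g x := by
  have hconc : ConcaveOn ℝ (convexHull ℝ s) (g - ⇑f) :=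
    hg.sub (((convexOn_id convex_univ).comp_affineMap f).subset (subset_univ _)
      (convex_convexHull ℝ s))
  obtain ⟨y, hy, hle⟩ := hconc.exists_le_of_mem_convexHull (subset_convexHull ℝ s) hx
  have := hfg y hy
  simp only [Pi.sub_apply] at hle
  linarith

theorem MeasureTheory.eqOn_of_setIntegral_eq_of_le {X : Type*} [TopologicalSpace X]
    [MeasurableSpace X] {μ : Measure X} [μ.IsOpenPosMeasure] {s : Set X} {f g : X → ℝ}
    (hs : MeasurableSet s) (hs' : s ⊆ closure (interior s)) (hf : ContinuousOn f s)
    (hg : ContinuousOn g s) (hfi : IntegrableOn f s μ) (hgi : IntegrableOn g s μ)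
    (hfg : ∀ x ∈ s, f x ≤ g x) (h : ∫ x in s, f x ∂μ = ∫ x in s, g x ∂μ) : EqOn f g s :=
  Measure.eqOn_of_ae_eq ((integral_eq_iff_of_ae_le hfi hgi ((ae_restrict_iff' hs).2
    (ae_of_all _ hfg))).1 h) hf hg hs'

theorem AffineMap.measurePreserving_of_involutive {E : Type*} [NormedAddCommGroup E]
    [NormedSpace ℝ E] [FiniteDimensional ℝ E] [MeasurableSpace E] [BorelSpace E] (μ : Measure E)
    [μ.IsAddHaarMeasure] {f : E →ᵃ[ℝ] E} (hf : Function.Involutive f) :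
    MeasurePreserving f μ μ := by
  have hdet : |LinearMap.det f.linear| = 1 := by
    have h := congrArg (fun g : E →ᵃ[ℝ] E => LinearMap.det g.linear)
      (show f.comp f = AffineMap.id ℝ E from AffineMap.ext hf)
    simp only [AffineMap.comp_linear, AffineMap.id_linear, LinearMap.det_comp, LinearMap.det_id,
      mul_self_eq_one_iff] at h
    rcases h with h | h <;> simp [h]
  have hlin : MeasurePreserving f.linear μ μ :=
    ⟨f.linear.continuous_of_finiteDimensional.measurable, by
      rw [Measure.map_linearMap_addHaar_eq_smul_addHaar μ (by intro h; simp [h] at hdet),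
        abs_inv, hdet, inv_one, ENNReal.ofReal_one, one_smul]⟩
  convert (measurePreserving_add_right μ (f 0)).comp hlin using 1
  exact f.decomp

section Simplex

variable {E : Type*} [NormedAddCommGroup E] [NormedSpace ℝ E]

namespace AffineBasis

variable {ι : Type*} [Fintype ι] (b : AffineBasis ι ℝ E)

theorem isCompact_convexHull : IsCompact (convexHull ℝ (range b)) :=
  (finite_range b).isCompact_convexHull ℝ

theorem subset_closure_interior_convexHull :
    convexHull ℝ (range b) ⊆ closure (interior (convexHull ℝ (range b))) := by
  rw [(convex_convexHull ℝ _).closure_interior_eq_closure_of_nonempty_interior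
    ⟨_, b.centroid_mem_interior_convexHull⟩]
  exact subset_closure

theorem constr_le_of_concaveOn {g : E → ℝ} (hconc : ConcaveOn ℝ (convexHull ℝ (range b)) g)
    {x : E} (hx : x ∈ convexHull ℝ (range b)) : b.constr (g ∘ b) x ≤ g x :=
  hconc.affineMap_le_of_mem_convexHull _ (by rintro _ ⟨i, rfl⟩; simp) hx

variable [MeasurableSpace E] (μ : Measure E) [μ.IsAddHaarMeasure]

theorem measureReal_convexHull_pos : 0 < μ.real (convexHull ℝ (range b)) :=
  ENNReal.toReal_pos
    (Measure.measure_pos_of_nonempty_interior μ ⟨_, b.centroid_mem_interior_convexHull⟩).ne'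
    b.isCompact_convexHull.measure_lt_top.ne

variable [BorelSpace E]

theorem integrableOn_convexHull {g : E → ℝ} (hg : ContinuousOn g (convexHull ℝ (range b))) :
    IntegrableOn g (convexHull ℝ (range b)) μ :=
  hg.integrableOn_compact b.isCompact_convexHull

variable [FiniteDimensional ℝ E]

theorem integrableOn_convexHull_affineMap (f : E →ᵃ[ℝ] ℝ) :
    IntegrableOn f (convexHull ℝ (range b)) μ :=
  b.integrableOn_convexHull μ f.continuous_of_finiteDimensional.continuousOn

theorem setIntegral_convexHull_coord_eq (i j : ι) :
    ∫ x in convexHull ℝ (range b), b.coord i x ∂μ =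
      ∫ x in convexHull ℝ (range b), b.coord j x ∂μ := by
  classical
  set σ : E →ᵃ[ℝ] E := b.constr (b ∘ Equiv.swap i j)
  have hσ : Function.Involutive σ := fun x => by
    change σ.comp σ x = AffineMap.id ℝ E x
    congr 1
    exact b.affineMap_ext fun k => by simp [σ]
  have hcoord : ∀ x, b.coord i (σ x) = b.coord j x := fun x => by
    change (b.coord i).comp σ x = b.coord j x
    congr 1
    refine b.affineMap_ext fun k => ?_
    simp only [σ, AffineMap.coe_comp, Function.comp_apply, constr_apply_self, coord_apply]
    rw [eq_comm (a := i), Equiv.swap_apply_eq_iff, Equiv.swap_apply_left]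
    exact if_congr eq_comm rfl rfl
  have himage : σ '' convexHull ℝ (range b) = convexHull ℝ (range b) := by
    have hσb : ⇑σ ∘ b = b ∘ Equiv.swap i j := funext fun k => b.constr_apply_self _ k
    rw [AffineMap.image_convexHull, ← range_comp, hσb, (Equiv.swap i j).surjective.range_comp]
  have hemb : MeasurableEmbedding σ := MeasurableEmbedding.of_measurable_inverse
    σ.continuous_of_finiteDimensional.measurable (by simp [hσ.surjective.range_eq])
    σ.continuous_of_finiteDimensional.measurable hσ.leftInverse
  calc ∫ x in convexHull ℝ (range b), b.coord i x ∂μ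
      = ∫ x in σ '' convexHull ℝ (range b), b.coord i x ∂μ := by rw [himage]
    _ = ∫ x in convexHull ℝ (range b), b.coord i (σ x) ∂μ :=
      (σ.measurePreserving_of_involutive μ hσ).setIntegral_image_emb hemb _ _
    _ = ∫ x in convexHull ℝ (range b), b.coord j x ∂μ := by simp_rw [hcoord]

theorem setIntegral_convexHull_coord (i : ι) :
    ∫ x in convexHull ℝ (range b), b.coord i x ∂μ =
      μ.real (convexHull ℝ (range b)) / Fintype.card ι := by
  have hsum : ∑ j, ∫ x in convexHull ℝ (range b), b.coord j x ∂μ =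
      μ.real (convexHull ℝ (range b)) := by
    rw [← integral_finsetSum _ fun j _ => b.integrableOn_convexHull_affineMap μ (b.coord j)]
    simp [b.sum_coord_apply_eq_one]
  have : Nonempty ι := b.nonempty
  rw [← hsum]
  simp_rw [b.setIntegral_convexHull_coord_eq μ _ i]
  rw [Finset.sum_const, Finset.card_univ, nsmul_eq_mul]
  field_simp

theorem setAverage_convexHull_affineMap (f : E →ᵃ[ℝ] ℝ) :
    ⨍ x in convexHull ℝ (range b), f x ∂μ = (∑ i, f (b i)) / Fintype.card ι := by
  have hf : ∀ x, f x = ∑ i, f (b i) * b.coord i x := fun x => by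
    conv_lhs => rw [b.eq_constr f]
    simp [constr_apply, mul_comm]
  have hT := (b.measureReal_convexHull_pos μ).ne'
  rw [setAverage_eq, smul_eq_mul, integral_congr_ae (ae_of_all _ hf),
    integral_finsetSum _ fun i _ => (b.integrableOn_convexHull_affineMap μ (b.coord i)).const_mul _]
  simp_rw [integral_const_mul, setIntegral_convexHull_coord, ← Finset.sum_mul]
  field_simp

theorem sum_div_card_le_setAverage_convexHull {g : E → ℝ}
    (hg : ContinuousOn g (convexHull ℝ (range b)))
    (hconc : ConcaveOn ℝ (convexHull ℝ (range b)) g) :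
    (∑ i, g (b i)) / Fintype.card ι ≤ ⨍ x in convexHull ℝ (range b), g x ∂μ := by
  have hA := b.setAverage_convexHull_affineMap μ (b.constr (g ∘ b))
  simp only [constr_apply_self, Function.comp_apply] at hA
  rw [← hA, setAverage_eq, setAverage_eq]
  exact mul_le_mul_of_nonneg_left (setIntegral_mono_on (b.integrableOn_convexHull_affineMap μ _)
    (b.integrableOn_convexHull μ hg) b.isCompact_convexHull.isClosed.measurableSet
    fun x hx => b.constr_le_of_concaveOn hconc hx) (by positivity)

theorem setAverage_convexHull_eq_iff {g : E → ℝ}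
    (hg : ContinuousOn g (convexHull ℝ (range b)))
    (hconc : ConcaveOn ℝ (convexHull ℝ (range b)) g) :
    ⨍ x in convexHull ℝ (range b), g x ∂μ = (∑ i, g (b i)) / Fintype.card ι ↔
      ∃ f : E →ᵃ[ℝ] ℝ, EqOn g f (convexHull ℝ (range b)) := by
  have hT := b.isCompact_convexHull.isClosed.measurableSet
  constructor
  · intro h
    have hA := b.setAverage_convexHull_affineMap μ (b.constr (g ∘ b))
    simp only [constr_apply_self, Function.comp_apply] at hA
    rw [← hA, setAverage_eq, setAverage_eq, smul_eq_mul, smul_eq_mul,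
      mul_right_inj' (inv_ne_zero (b.measureReal_convexHull_pos μ).ne')] at h
    exact ⟨_, (eqOn_of_setIntegral_eq_of_le hT b.subset_closure_interior_convexHull
      (b.constr (g ∘ b)).continuous_of_finiteDimensional.continuousOn hg
      (b.integrableOn_convexHull_affineMap μ _) (b.integrableOn_convexHull μ hg)
      (fun x hx => b.constr_le_of_concaveOn hconc hx) h.symm).symm⟩
  · rintro ⟨f, hf⟩
    have hvert : ∀ i, g (b i) = f (b i) := fun i => hf (subset_convexHull ℝ _ (mem_range_self i))
    rw [setAverage_congr_fun hT (ae_of_all _ fun x hx => hf hx),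
      b.setAverage_convexHull_affineMap μ, Finset.sum_congr rfl fun i _ => hvert i]

end AffineBasis

end Simplex

theorem isAffineOn_iff_exists_affineMap {D : Set (ℝ × ℝ)} {g : ℝ × ℝ → ℝ} :
    IsAffineOn D g ↔ ∃ f : (ℝ × ℝ) →ᵃ[ℝ] ℝ, EqOn g f D := by
  constructor
  · rintro ⟨l, c, h⟩
    exact ⟨l.toAffineMap + AffineMap.const ℝ _ c, fun x hx => by simp [h x hx]⟩
  · rintro ⟨f, h⟩
    exact ⟨f.linear, f 0, fun x hx => (h hx).trans (congrFun f.decomp x)⟩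

/-- Trapezoid estimate for a triangle: for a continuous concave function `g` on a
nondegenerate triangle `T = conv{p₀,p₁,p₂}`, the average of `g` over `T` is at least the
average of the vertex values, with equality iff `g` is affine on `T`. -/
theorem triangle_trapezoid (p₀ p₁ p₂ : ℝ × ℝ)
    (hindep : AffineIndependent ℝ ![p₀, p₁, p₂])
    (T : Set (ℝ × ℝ)) (hT : T = convexHull ℝ {p₀, p₁, p₂})
    (g : ℝ × ℝ → ℝ) (hg : ContinuousOn g T) (hconc : ConcaveOn ℝ T g) :
    ((volume T).toReal⁻¹ * (∫ x in T, g x) ≥ (g p₀ + g p₁ + g p₂) / 3) ∧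
      ((volume T).toReal⁻¹ * (∫ x in T, g x) = (g p₀ + g p₁ + g p₂) / 3 ↔
        IsAffineOn T g) := by
  let b : AffineBasis (Fin 3) ℝ (ℝ × ℝ) :=
    ⟨![p₀, p₁, p₂], hindep, hindep.affineSpan_eq_top_iff_card_eq_finrank_add_one.2 (by simp)⟩
  have hb : ⇑b = ![p₀, p₁, p₂] := rfl
  have hTb : T = convexHull ℝ (range b) := by
    rw [hT, hb, Matrix.range_cons, Matrix.range_cons, Matrix.range_cons, Matrix.range_empty,
      union_empty, singleton_union, singleton_union]
  have havg : (volume T).toReal⁻¹ * (∫ x in T, g x) = ⨍ x in T, g x := by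
    rw [setAverage_eq, smul_eq_mul, Measure.real]
  have hvert : (∑ i, g (b i)) / Fintype.card (Fin 3) = (g p₀ + g p₁ + g p₂) / 3 := by
    simp [hb, Fin.sum_univ_three]
  subst hTb
  rw [havg, ← hvert, isAffineOn_iff_exists_affineMap]
  exact ⟨b.sum_div_card_le_setAverage_convexHull volume hg hconc,
    b.setAverage_convexHull_eq_iff volume hg hconc⟩
end
end
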